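/- arXiv:1402.4945 — 3 statements merged into one kernel-verified Lean document; each statement's English description precedes it below -/
import Mathlib

section
/- The operator T on ℓ²(OE) determined on the standard orthonormal basis by Te = Σ w(e′)e′, the sum over all oriented edges e′ with o(e′) = t(e) and e′ ≠ e⁻¹, is a well-defined bounded operator, and Σ_{e∈OE} ‖Te‖ ≤ M·w(X) < ∞ (so that T is of trace class). -/
/- Formalization of a statement from "Ihara Zeta functions of infinite weighted graphs"
   (A. Deitmar).  Context: `X` is a connected graph of bounded valency, `w` is a positive
   weight function on oriented edges (darts) with finite total weight. -/

open scoped BigOperators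
open SimpleGraph

attribute [local instance 10] Classical.propDecidable
noncomputable local instance (priority := 10) {α : Type*} : DecidableEq α := Classical.decEq _

variable {V : Type*}

/-- The standard basis vector of `ℓ²(ι)` at `i`. -/
noncomputable def bv {ι : Type*} (i : ι) : lp (fun _ : ι => ℂ) 2 := lp.single 2 i 1

lemma bv_apply {ι : Type*} (i j : ι) : (bv i) j = if j = i then (1 : ℂ) else 0 := by
  rw [bv, lp.single_apply]
  by_cases h : j = i
  · subst h; simp
  · simp [h]

/-- Darts with a given terminal vertex form a finite set when the neighbor set is finite. -/
lemma dart_snd_finite (G : SimpleGraph V) (x : V) (h : (G.neighborSet x).Finite) :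
    {e : G.Dart | e.toProd.2 = x}.Finite := by
  apply Set.Finite.of_finite_image (f := fun e => e.toProd.1)
  · refine h.subset ?_
    rintro y ⟨e, he, rfl⟩
    have h2 : e.toProd.2 = x := he
    have hadj := e.adj
    rw [h2] at hadj
    exact hadj.symm
  · intro a ha b hb hab
    exact SimpleGraph.Dart.ext _ _ (Prod.ext hab ((Set.mem_setOf_eq ▸ ha).trans (Set.mem_setOf_eq ▸ hb).symm))

lemma dart_snd_ncard_le (G : SimpleGraph V) (x : V) (h : (G.neighborSet x).Finite) :
    {e : G.Dart | e.toProd.2 = x}.ncard ≤ (G.neighborSet x).ncard := by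
  refine Set.ncard_le_ncard_of_injOn (fun e => e.toProd.1) ?_ ?_ h
  · rintro e he
    have h2 : e.toProd.2 = x := he
    have hadj := e.adj
    rw [h2] at hadj
    exact hadj.symm
  · intro a ha b hb hab
    exact SimpleGraph.Dart.ext _ _ (Prod.ext hab ((Set.mem_setOf_eq ▸ ha).trans (Set.mem_setOf_eq ▸ hb).symm))

lemma dart_fst_finite (G : SimpleGraph V) (x : V) (h : (G.neighborSet x).Finite) :
    {e : G.Dart | e.toProd.1 = x}.Finite := by
  apply Set.Finite.of_finite_image (f := fun e => e.toProd.2)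
  · refine h.subset ?_
    rintro y ⟨e, he, rfl⟩
    have h2 : e.toProd.1 = x := he
    have hadj := e.adj
    rw [h2] at hadj
    exact hadj
  · intro a ha b hb hab
    exact SimpleGraph.Dart.ext _ _
      (Prod.ext ((Set.mem_setOf_eq ▸ ha).trans (Set.mem_setOf_eq ▸ hb).symm) hab)

/-- The operator `T` on `ℓ²(OE)` with `Te = Σ_{o(e') = t(e), e' ≠ e⁻¹} w(e')·e'`
is a well-defined bounded operator and `Σ_e ‖Te‖ ≤ M·w(X) < ∞` (so `T` is of trace class). -/
theorem statement_0 (G : SimpleGraph V) (hconn : G.Connected)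
    (M : ℝ) (hM : 0 < M)
    (hval : ∀ x : V, (G.neighborSet x).Finite ∧ ((G.neighborSet x).ncard : ℝ) ≤ M)
    (w : G.Dart → ℝ) (hw : ∀ e, 0 < w e) (hsum : Summable w) :
    ∃ T : lp (fun _ : G.Dart => ℂ) 2 →L[ℂ] lp (fun _ : G.Dart => ℂ) 2,
      (∀ e e' : G.Dart, T (bv e) e'
        = if e'.toProd.1 = e.toProd.2 ∧ e' ≠ e.symm then (w e' : ℂ) else 0) ∧
      Summable (fun e : G.Dart => ‖T (bv e)‖) ∧
      ∑' e : G.Dart, ‖T (bv e)‖ ≤ M * ∑' e : G.Dart, w e := by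
  classical
  have hp2 : (0:ℝ) < (2 : ENNReal).toReal := by norm_num
  have htoReal : (2 : ENNReal).toReal = 2 := by norm_num
  -- pointwise bound on w
  set C : ℝ := ∑' e, w e with hC
  have hwC : ∀ e, w e ≤ C := fun e => Summable.le_tsum hsum e (fun _ _ => (hw _).le)
  have hC0 : 0 ≤ C := tsum_nonneg (fun e => (hw e).le)
  -- summability of w²
  have hsq : Summable (fun e => w e ^ 2) := by
    refine Summable.of_nonneg_of_le (fun e => sq_nonneg _) (fun e => ?_) (hsum.mul_left C)
    calc w e ^ 2 = w e * w e := sq (w e) ▸ rfl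
    _ ≤ C * w e := mul_le_mul_of_nonneg_right (hwC e) (hw e).le
  -- finite sets of incoming darts
  have hIncFin : ∀ e' : G.Dart,
      {e : G.Dart | e.toProd.2 = e'.toProd.1 ∧ e ≠ e'.symm}.Finite := fun e' =>
    (dart_snd_finite G _ (hval _).1).subset (fun e he => he.1)
  let F : G.Dart → Finset G.Dart := fun e' => (hIncFin e').toFinset
  have hFmem : ∀ e' e : G.Dart,
      e ∈ F e' ↔ (e.toProd.2 = e'.toProd.1 ∧ e ≠ e'.symm) := by
    intro e' e; simp [F, Set.Finite.mem_toFinset]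
  have hFcard : ∀ e' : G.Dart, ((F e').card : ℝ) ≤ M := by
    intro e'
    have h1 : (F e').card = {e : G.Dart | e.toProd.2 = e'.toProd.1 ∧ e ≠ e'.symm}.ncard :=
      (Set.ncard_eq_toFinset_card _ (hIncFin e')).symm
    have h2 : {e : G.Dart | e.toProd.2 = e'.toProd.1 ∧ e ≠ e'.symm}.ncard
        ≤ {e : G.Dart | e.toProd.2 = e'.toProd.1}.ncard :=
      Set.ncard_le_ncard (fun e he => he.1) (dart_snd_finite G _ (hval _).1)
    have h3 := dart_snd_ncard_le G e'.toProd.1 (hval _).1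
    have h4 := (hval e'.toProd.1).2
    rw [h1]
    calc ({e : G.Dart | e.toProd.2 = e'.toProd.1 ∧ e ≠ e'.symm}.ncard : ℝ)
        ≤ ((G.neighborSet e'.toProd.1).ncard : ℝ) := by exact_mod_cast h2.trans h3
    _ ≤ M := h4
  -- the underlying function of the operator
  let Tf : (lp (fun _ : G.Dart => ℂ) 2) → G.Dart → ℂ :=
    fun x e' => (w e' : ℂ) * ∑ e ∈ F e', x e
  have hTf_bound : ∀ x e', ‖Tf x e'‖ ≤ M * ‖x‖ * w e' := by
    intro x e'
    have h1 : ‖Tf x e'‖ = w e' * ‖∑ e ∈ F e', x e‖ := by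
      rw [norm_mul, Complex.norm_real, Real.norm_of_nonneg (hw e').le]
    rw [h1]
    have h2 : ‖∑ e ∈ F e', x e‖ ≤ ∑ e ∈ F e', ‖x e‖ := norm_sum_le _ _
    have h3 : ∑ e ∈ F e', ‖x e‖ ≤ ∑ _e ∈ F e', ‖x‖ :=
      Finset.sum_le_sum (fun e _ => lp.norm_apply_le_norm two_ne_zero x e)
    have h4 : (∑ _e ∈ F e', ‖x‖) = (F e').card * ‖x‖ := by
      rw [Finset.sum_const, nsmul_eq_mul]
    have h5 : ‖∑ e ∈ F e', x e‖ ≤ M * ‖x‖ := by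
      refine (h2.trans h3).trans ?_
      rw [h4]
      exact mul_le_mul_of_nonneg_right (hFcard e') (norm_nonneg x)
    calc w e' * ‖∑ e ∈ F e', x e‖ ≤ w e' * (M * ‖x‖) :=
          mul_le_mul_of_nonneg_left h5 (hw e').le
    _ = M * ‖x‖ * w e' := by ring
  have hMx : ∀ x : lp (fun _ : G.Dart => ℂ) 2, 0 ≤ M * ‖x‖ :=
    fun x => mul_nonneg hM.le (norm_nonneg x)
  have hTf_mem : ∀ x, Memℓp (Tf x) 2 := by
    intro x
    apply memℓp_gen
    rw [htoReal]
    refine Summable.of_nonneg_of_le (fun e' => by positivity) (fun e' => ?_)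
      ((hsq.mul_left ((M * ‖x‖) ^ 2)))
    have := hTf_bound x e'
    calc ‖Tf x e'‖ ^ (2:ℝ) = ‖Tf x e'‖ ^ (2:ℕ) := by
          rw [← Real.rpow_natCast ‖Tf x e'‖ 2]; norm_num
    _ ≤ (M * ‖x‖ * w e') ^ (2:ℕ) := by
          exact pow_le_pow_left₀ (norm_nonneg _) this 2
    _ = (M * ‖x‖) ^ 2 * w e' ^ 2 := by ring
  -- the linear map
  let Tl : lp (fun _ : G.Dart => ℂ) 2 →ₗ[ℂ] lp (fun _ : G.Dart => ℂ) 2 :=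
    { toFun := fun x => ⟨Tf x, hTf_mem x⟩
      map_add' := by
        intro x y
        apply lp.ext
        funext e'
        have : ∀ z : lp (fun _ : G.Dart => ℂ) 2, (⟨Tf z, hTf_mem z⟩ :
            lp (fun _ : G.Dart => ℂ) 2) e' = Tf z e' := fun _ => rfl
        show Tf (x + y) e' = (⟨Tf x, hTf_mem x⟩ + ⟨Tf y, hTf_mem y⟩ :
          lp (fun _ : G.Dart => ℂ) 2) e'
        have hxy : Tf (x + y) e' = Tf x e' + Tf y e' := by
          simp only [Tf]
          have : ∑ e ∈ F e', (x + y) e = (∑ e ∈ F e', x e) + ∑ e ∈ F e', y e := by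
            rw [← Finset.sum_add_distrib]
            refine Finset.sum_congr rfl (fun e _ => ?_)
            exact lp.coeFn_add x y ▸ rfl
          rw [this]; ring
        rw [hxy]; rfl
      map_smul' := by
        intro c x
        apply lp.ext
        funext e'
        show Tf (c • x) e' = (c • (⟨Tf x, hTf_mem x⟩ :
          lp (fun _ : G.Dart => ℂ) 2)) e'
        have hxs : Tf (c • x) e' = c * Tf x e' := by
          simp only [Tf]
          have : ∑ e ∈ F e', (c • x) e = c * ∑ e ∈ F e', x e := by
            rw [Finset.mul_sum]
            refine Finset.sum_congr rfl (fun e _ => ?_)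
            exact lp.coeFn_smul c x ▸ rfl
          rw [this]; ring
        rw [hxs]; rfl }
  have hTl_apply : ∀ x e', (Tl x) e' = Tf x e' := fun _ _ => rfl
  -- boundedness
  set K : ℝ := M * Real.sqrt (∑' e, w e ^ 2) with hK
  have hK0 : 0 ≤ K := mul_nonneg hM.le (Real.sqrt_nonneg _)
  have hTl_bound : ∀ x, ‖Tl x‖ ≤ K * ‖x‖ := by
    intro x
    refine lp.norm_le_of_tsum_le hp2 (mul_nonneg hK0 (norm_nonneg x)) ?_
    rw [htoReal]
    have hsummand : ∀ e', ‖(Tl x) e'‖ ^ (2:ℝ) ≤ (M * ‖x‖) ^ 2 * w e' ^ 2 := by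
      intro e'
      rw [hTl_apply]
      calc ‖Tf x e'‖ ^ (2:ℝ) = ‖Tf x e'‖ ^ (2:ℕ) := by
            rw [← Real.rpow_natCast ‖Tf x e'‖ 2]; norm_num
      _ ≤ (M * ‖x‖ * w e') ^ (2:ℕ) := pow_le_pow_left₀ (norm_nonneg _) (hTf_bound x e') 2
      _ = (M * ‖x‖) ^ 2 * w e' ^ 2 := by ring
    have hsum1 : Summable (fun e' => ‖(Tl x) e'‖ ^ (2:ℝ)) := by
      have := (lp.memℓp (Tl x)).summable hp2
      rwa [htoReal] at this
    calc ∑' e', ‖(Tl x) e'‖ ^ (2:ℝ)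
        ≤ ∑' e', (M * ‖x‖) ^ 2 * w e' ^ 2 :=
          Summable.tsum_le_tsum hsummand hsum1 (hsq.mul_left _)
    _ = (M * ‖x‖) ^ 2 * ∑' e', w e' ^ 2 := tsum_mul_left
    _ = (K * ‖x‖) ^ (2:ℝ) := by
          have h1 : Real.sqrt (∑' e, w e ^ 2) ^ 2 = ∑' e, w e ^ 2 :=
            Real.sq_sqrt (tsum_nonneg (fun e => sq_nonneg _))
          rw [Real.rpow_two]
          calc (M * ‖x‖) ^ 2 * ∑' e', w e' ^ 2
              = (M * ‖x‖) ^ 2 * (Real.sqrt (∑' e, w e ^ 2)) ^ 2 := by rw [h1]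
            _ = (K * ‖x‖) ^ 2 := by rw [hK]; ring
  let T : lp (fun _ : G.Dart => ℂ) 2 →L[ℂ] lp (fun _ : G.Dart => ℂ) 2 :=
    Tl.mkContinuous K hTl_bound
  have hT_apply : ∀ x e', (T x) e' = Tf x e' := fun _ _ => rfl
  -- condition symmetry
  have hcond : ∀ e e' : G.Dart,
      (e.toProd.2 = e'.toProd.1 ∧ e ≠ e'.symm) ↔
        (e'.toProd.1 = e.toProd.2 ∧ e' ≠ e.symm) := by
    intro e e'
    constructor
    · rintro ⟨h1, h2⟩
      refine ⟨h1.symm, fun h => h2 ?_⟩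
      rw [h]; exact (SimpleGraph.Dart.symm_symm e).symm
    · rintro ⟨h1, h2⟩
      refine ⟨h1.symm, fun h => h2 ?_⟩
      rw [h]; exact (SimpleGraph.Dart.symm_symm e').symm
  -- the matrix-entry formula
  have hTbv : ∀ e e' : G.Dart, (T (bv e)) e'
      = if e'.toProd.1 = e.toProd.2 ∧ e' ≠ e.symm then (w e' : ℂ) else 0 := by
    intro e e'
    have h0 : (T (bv e)) e' = Tf (bv e) e' := rfl
    rw [h0]
    have hsumeq : (∑ f ∈ F e', (bv e : ∀ _ : G.Dart, ℂ) f)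
        = if e ∈ F e' then (1:ℂ) else 0 := by
      by_cases he : e ∈ F e'
      · rw [if_pos he,
          Finset.sum_eq_single_of_mem e he
            (fun f _ hne => by rw [bv_apply, if_neg hne]),
          bv_apply, if_pos rfl]
      · rw [if_neg he, Finset.sum_eq_zero]
        intro f hf
        refine (bv_apply e f).trans (if_neg ?_)
        rintro rfl
        exact he hf
    show (w e' : ℂ) * ∑ f ∈ F e', (bv e) f = _
    rw [hsumeq]
    by_cases h : e'.toProd.1 = e.toProd.2 ∧ e' ≠ e.symm
    · rw [if_pos ((hFmem e' e).2 ((hcond e e').mpr h)), if_pos h, mul_one]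
    · rw [if_neg (fun hm => h ((hcond e e').mp ((hFmem e' e).1 hm))), if_neg h, mul_zero]
  -- outgoing darts
  have hOutFin : ∀ e : G.Dart,
      {e' : G.Dart | e'.toProd.1 = e.toProd.2 ∧ e' ≠ e.symm}.Finite := fun e =>
    (dart_fst_finite G _ (hval _).1).subset (fun a ha => ha.1)
  let S : G.Dart → Finset G.Dart := fun e => (hOutFin e).toFinset
  have hSmem : ∀ e e' : G.Dart,
      e' ∈ S e ↔ (e'.toProd.1 = e.toProd.2 ∧ e' ≠ e.symm) := by
    intro e e'; simp [S, Set.Finite.mem_toFinset]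
  let g : G.Dart → ℝ := fun e => ∑ e' ∈ S e, w e'
  have hg0 : ∀ e, 0 ≤ g e := fun e => Finset.sum_nonneg (fun e' _ => (hw e').le)
  -- norm estimate ‖T (bv e)‖ ≤ g e
  have hnorm : ∀ e, ‖T (bv e)‖ ≤ g e := by
    intro e
    refine lp.norm_le_of_tsum_le hp2 (hg0 e) ?_
    rw [htoReal]
    have happ : ∀ e', ‖(T (bv e)) e'‖ ^ (2:ℝ)
        = if e' ∈ S e then w e' ^ 2 else 0 := by
      intro e'
      rw [Real.rpow_two, hTbv e e']
      by_cases h : e'.toProd.1 = e.toProd.2 ∧ e' ≠ e.symm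
      · rw [if_pos h, if_pos ((hSmem e e').2 h), Complex.norm_real,
          Real.norm_of_nonneg (hw _).le]
      · rw [if_neg h, if_neg (fun hm => h ((hSmem e e').1 hm))]; simp
    have h1 : ∑' e', ‖(T (bv e)) e'‖ ^ (2:ℝ) = ∑ e' ∈ S e, w e' ^ 2 := by
      rw [tsum_congr happ,
        tsum_eq_sum (s := S e) (fun e' he' => if_neg he')]
      exact Finset.sum_congr rfl (fun e' he' => if_pos he')
    rw [h1, Real.rpow_two]
    have h2 : ∀ e' ∈ S e, w e' ^ 2 ≤ w e' * g e := by
      intro e' he'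
      have h3 : w e' ≤ g e := Finset.single_le_sum (fun i _ => (hw i).le) he'
      calc w e' ^ 2 = w e' * w e' := sq (w e')
      _ ≤ w e' * g e := mul_le_mul_of_nonneg_left h3 (hw e').le
    calc ∑ e' ∈ S e, w e' ^ 2 ≤ ∑ e' ∈ S e, w e' * g e := Finset.sum_le_sum h2
    _ = (∑ e' ∈ S e, w e') * g e := (Finset.sum_mul _ _ _).symm
    _ = g e ^ 2 := by rw [sq]
  -- double counting
  let vs : G.Dart × G.Dart → ℝ := fun p =>
    if p.1.toProd.1 = p.2.toProd.2 ∧ p.1 ≠ p.2.symm then w p.1 else 0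
  have hvs0 : ∀ p, 0 ≤ vs p := by
    intro p; by_cases h : p.1.toProd.1 = p.2.toProd.2 ∧ p.1 ≠ p.2.symm
    · simp only [vs, if_pos h]; exact (hw _).le
    · simp only [vs, if_neg h]; exact le_rfl
  have hfibfin : ∀ e' : G.Dart, ∀ e ∉ (dart_snd_finite G e'.toProd.1 (hval _).1).toFinset,
      vs (e', e) = 0 := by
    intro e' e he
    refine if_neg (fun hP => he ?_)
    rw [Set.Finite.mem_toFinset]
    exact hP.1.symm
  have h_fiber : ∀ e', Summable (fun e => vs (e', e)) :=
    fun e' => summable_of_ne_finset_zero (hfibfin e')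
  have hcard_s : ∀ x : V,
      (((dart_snd_finite G x (hval x).1).toFinset).card : ℝ) ≤ M := by
    intro x
    have h1 : ((dart_snd_finite G x (hval x).1).toFinset).card
        = {e : G.Dart | e.toProd.2 = x}.ncard :=
      (Set.ncard_eq_toFinset_card _ _).symm
    rw [h1]
    calc ({e : G.Dart | e.toProd.2 = x}.ncard : ℝ)
        ≤ ((G.neighborSet x).ncard : ℝ) := by
          exact_mod_cast dart_snd_ncard_le G x (hval x).1
    _ ≤ M := (hval x).2
  have h_fiber_le : ∀ e', ∑' e, vs (e', e) ≤ M * w e' := by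
    intro e'
    rw [tsum_eq_sum (hfibfin e')]
    calc ∑ e ∈ (dart_snd_finite G e'.toProd.1 (hval _).1).toFinset, vs (e', e)
        ≤ ∑ _e ∈ (dart_snd_finite G e'.toProd.1 (hval _).1).toFinset, w e' := by
          refine Finset.sum_le_sum (fun e _ => ?_)
          by_cases h : e'.toProd.1 = e.toProd.2 ∧ e' ≠ e.symm
          · simp only [vs, if_pos h]; exact le_rfl
          · simp only [vs, if_neg h]; exact (hw e').le
    _ = ((dart_snd_finite G e'.toProd.1 (hval _).1).toFinset).card * w e' := by
          rw [Finset.sum_const, nsmul_eq_mul]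
    _ ≤ M * w e' := mul_le_mul_of_nonneg_right (hcard_s _) (hw e').le
  have h_row : Summable (fun e' => ∑' e, vs (e', e)) :=
    Summable.of_nonneg_of_le (fun e' => tsum_nonneg (fun e => hvs0 _))
      h_fiber_le (hsum.mul_left M)
  have hvs : Summable vs :=
    (summable_prod_of_nonneg hvs0).mpr ⟨h_fiber, h_row⟩
  have hv : Summable (fun p : G.Dart × G.Dart => vs p.swap) := hvs.prod_symm
  have hg_sum : Summable (fun e => ∑' e', vs (e', e)) :=
    ((summable_prod_of_nonneg (fun p => hvs0 p.swap)).mp hv).2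
  have hg_eq : ∀ e, ∑' e', vs (e', e) = g e := by
    intro e
    rw [tsum_eq_sum (s := S e)
      (fun e' he' => if_neg (fun hP => he' ((hSmem e e').2 hP)))]
    exact Finset.sum_congr rfl (fun e' he' => if_pos ((hSmem e e').1 he'))
  have hgS : Summable g := hg_sum.congr hg_eq
  have hnsum : Summable (fun e : G.Dart => ‖T (bv e)‖) :=
    Summable.of_nonneg_of_le (fun e => norm_nonneg _) hnorm hgS
  refine ⟨T, hTbv, hnsum, ?_⟩
  calc ∑' e, ‖T (bv e)‖ ≤ ∑' e, g e := Summable.tsum_le_tsum hnorm hnsum hgS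
  _ = ∑' e, ∑' e', vs (e', e) := tsum_congr (fun e => (hg_eq e).symm)
  _ = ∑' e', ∑' e, vs (e', e) := Summable.tsum_comm hvs
  _ ≤ ∑' e', M * w e' := Summable.tsum_le_tsum h_fiber_le h_row (hsum.mul_left M)
  _ = M * ∑' e, w e := tsum_mul_left
end

section
/- There exists ε > 0 such that for every complex u with |u| < ε the family (w(p)·u^{l(p)})_{p} indexed by the prime cycles p of X is absolutely summable, and the infinite product Π_p (1 − w(p)u^{l(p)}) over all prime cycles converges (is multipliable) with nonzero value. -/
/- Formalization of a statement from "Ihara Zeta functions of infinite weighted graphs"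
   (A. Deitmar).  Context: `X` is a connected graph of bounded valency, `w` is a positive
   weight function on oriented edges (darts) with finite total weight. -/

open scoped BigOperators
open SimpleGraph

attribute [local instance 10] Classical.propDecidable
variable {V : Type*}

/-- For adjacent vertices `x, y`, `dartW G w h = w(x,y)·w(y,x)`, the weight `W(x,y)` of the
underlying edge. -/
noncomputable def dartW (G : SimpleGraph V) (w : G.Dart → ℝ) {x y : V} (h : G.Adj x y) : ℝ :=
  w ⟨(x, y), h⟩ * w ⟨(y, x), h.symm⟩

/-- Two cyclically indexed paths are equivalent iff they differ by a cyclic shift. -/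
def shiftSetoid (n : ℕ) (P : (ZMod n → V) → Prop) : Setoid {f : ZMod n → V // P f} where
  r p q := ∃ k : ZMod n, ∀ i, q.1 i = p.1 (i + k)
  iseqv := by
    refine ⟨fun p => ⟨0, fun i => by rw [add_zero]⟩, ?_, ?_⟩
    · rintro p q ⟨k, h⟩
      refine ⟨-k, fun i => ?_⟩
      rw [h (i + -k)]
      ring_nf
    · rintro p q r ⟨k, h⟩ ⟨k', h'⟩
      refine ⟨k + k', fun i => ?_⟩
      rw [h' i, h (i + k')]
      ring_nf

/-- The weight of a closed path, encoded as a function `ZMod n → V` (the vertices visited,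
cyclically): the product of the weights of the traversed oriented edges. -/
noncomputable def cycW (G : SimpleGraph V) (w : G.Dart → ℝ) (n : ℕ) [NeZero n]
    (f : ZMod n → V) (h : ∀ i, G.Adj (f i) (f (i + 1))) : ℝ :=
  ∏ i : ZMod n, w ⟨(f i, f (i + 1)), h i⟩

/-- The weight descends to shift-equivalence classes (cycles). -/
noncomputable def liftWgt {G : SimpleGraph V} (w : G.Dart → ℝ) (n : ℕ) [NeZero n]
    (P : (ZMod n → V) → Prop) (hP : ∀ f, P f → ∀ i, G.Adj (f i) (f (i + 1))) :
    Quotient (shiftSetoid (V := V) n P) → ℝ :=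
  Quotient.lift (fun p => cycW G w n p.1 (hP p.1 p.2)) (by
    rintro p q ⟨k, h⟩
    unfold cycW
    refine (Fintype.prod_equiv (Equiv.addRight k) _ _ (fun i => ?_)).symm
    have h1 : q.1 i = p.1 ((Equiv.addRight k) i) := h i
    have h2 : q.1 (i + 1) = p.1 ((Equiv.addRight k) i + 1) := by
      rw [h (i + 1)]
      show p.1 (i + 1 + k) = p.1 (i + k + 1)
      ring_nf
    congr 1
    exact SimpleGraph.Dart.ext _ _ (Prod.ext h1 h2))

/-- A closed path without backtracking and without tail: encoded cyclically, saying that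
the cyclic sequence is adjacent in every step and `f (i-1) ≠ f (i+1)` for every `i`
(at `i = 0` this is exactly the no-tail condition). -/
def ClosedRedP (G : SimpleGraph V) (n : ℕ) (f : ZMod n → V) : Prop :=
  (∀ i, G.Adj (f i) (f (i + 1))) ∧ ∀ i, f (i - 1) ≠ f (i + 1)

/-- A cyclically indexed closed path is primitive iff it is not a power of a shorter one. -/
def IsPrimitive (n : ℕ) (f : ZMod n → V) : Prop :=
  ¬ ∃ d : ℕ, 0 < d ∧ d < n ∧ d ∣ n ∧ ∀ i, f (i + (d : ZMod n)) = f i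

/-- Predicate for prime cycles: closed, reduced, without tail, and primitive. -/
def PrimeP (G : SimpleGraph V) (n : ℕ) (f : ZMod n → V) : Prop :=
  ClosedRedP G n f ∧ IsPrimitive n f

/-- The type of prime cycles of length `n`. -/
def PrimeCycles (G : SimpleGraph V) (n : ℕ) : Type _ :=
  Quotient (shiftSetoid (V := V) n (PrimeP G n))

/-- The index type of all prime cycles of `X`. -/
def PrimeIdx (G : SimpleGraph V) : Type _ :=
  Σ n : {n : ℕ // 0 < n}, PrimeCycles G n.1

/-- The length of a prime cycle. -/
def PrimeIdx.len {G : SimpleGraph V} (p : PrimeIdx G) : ℕ := p.1.1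

/-- The weight of a prime cycle. -/
noncomputable def PrimeIdx.wgt {G : SimpleGraph V} (w : G.Dart → ℝ) (p : PrimeIdx G) : ℝ :=
  haveI : NeZero p.1.1 := ⟨p.1.2.ne'⟩
  liftWgt w p.1.1 (PrimeP G p.1.1) (fun _ hf => hf.1.1) p.2

/-!
A prime cycle of length `n` is determined by the `n` darts of a representative, so the weights of
distinct prime cycles of length `n` are distinct monomials in the expansion of `(∑ₑ w e)ⁿ`. Hence
the prime cycles of length `n` contribute at most `(W ‖u‖)ⁿ` to `∑ₚ w(p) ‖u‖^{l(p)}`, where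
`W = ∑ₑ w e`, and for `‖u‖ < 1 / (W + 1)` the geometric series dominates. Each factor then has
`‖w(p) u^{l(p)}‖ < 1`, and absolute summability gives a convergent product with nonzero value.
-/

theorem Finset.sum_prod_le_tsum_pow {α ι : Type*} [Fintype ι] {w : α → ℝ} (hw : ∀ a, 0 ≤ w a)
    (hsum : Summable w) (S : Finset (ι → α)) :
    ∑ g ∈ S, ∏ i, w (g i) ≤ (∑' a, w a) ^ Fintype.card ι := by
  classical
  calc ∑ g ∈ S, ∏ i, w (g i)
      ≤ ∑ g ∈ Fintype.piFinset (fun i => S.image (· i)), ∏ i, w (g i) :=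
        Finset.sum_le_sum_of_subset_of_nonneg
          (fun g hg => Fintype.mem_piFinset.mpr fun i => Finset.mem_image_of_mem _ hg)
          (fun g _ _ => Finset.prod_nonneg fun i _ => hw _)
    _ = ∏ i, ∑ a ∈ S.image (· i), w a := (Finset.prod_univ_sum _ _).symm
    _ ≤ ∏ _i : ι, ∑' a, w a :=
        Finset.prod_le_prod (fun i _ => Finset.sum_nonneg fun a _ => hw a)
          (fun i _ => hsum.sum_le_tsum _ fun a _ => hw a)
    _ = (∑' a, w a) ^ Fintype.card ι := by rw [Finset.prod_const, Finset.card_univ]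

namespace PrimeCycles

variable {G : SimpleGraph V} {n : ℕ}

noncomputable def darts (q : PrimeCycles G n) (i : ZMod n) : G.Dart :=
  ⟨((Quotient.out q).1 i, (Quotient.out q).1 (i + 1)), (Quotient.out q).2.1.1 i⟩

theorem darts_injective : Function.Injective (darts (G := G) (n := n)) := by
  intro q q' h
  have h_out : ∀ i, (Quotient.out q).1 i = (Quotient.out q').1 i := fun i =>
    congrArg (fun d : G.Dart => d.toProd.1) (congrFun h i)
  exact Quotient.out_injective (Subtype.ext (funext h_out))

variable [NeZero n] (w : G.Dart → ℝ)

theorem liftWgt_eq_prod_darts (q : PrimeCycles G n) :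
    liftWgt w n (PrimeP G n) (fun _ hf => hf.1.1) q = ∏ i, w (q.darts i) := by
  conv_lhs => rw [← Quotient.out_eq q]
  rfl

theorem sum_liftWgt_le (hw : ∀ e, 0 ≤ w e) (hsum : Summable w) (S : Finset (PrimeCycles G n)) :
    ∑ q ∈ S, liftWgt w n (PrimeP G n) (fun _ hf => hf.1.1) q ≤ (∑' e, w e) ^ n := by
  simp only [liftWgt_eq_prod_darts]
  rw [← Finset.sum_image (f := fun g : ZMod n → G.Dart => ∏ i, w (g i))
    fun a _ b _ h => darts_injective h]
  simpa only [ZMod.card] using Finset.sum_prod_le_tsum_pow hw hsum (S.image darts)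

end PrimeCycles

namespace PrimeIdx

variable {G : SimpleGraph V} {w : G.Dart → ℝ}

theorem wgt_nonneg (hw : ∀ e, 0 ≤ w e) (p : PrimeIdx G) : 0 ≤ p.wgt w := by
  obtain ⟨⟨n, hn⟩, q⟩ := p
  have : NeZero n := ⟨hn.ne'⟩
  exact (PrimeCycles.liftWgt_eq_prod_darts w q).trans_ge
    (Finset.prod_nonneg fun i _ => hw _)

theorem wgt_le (hw : ∀ e, 0 ≤ w e) (hsum : Summable w) (p : PrimeIdx G) :
    p.wgt w ≤ (∑' e, w e) ^ p.len := by
  obtain ⟨⟨n, hn⟩, q⟩ := p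
  have : NeZero n := ⟨hn.ne'⟩
  exact (Finset.sum_singleton _ _).symm.trans_le (PrimeCycles.sum_liftWgt_le w hw hsum {q})

theorem wgt_mul_pow_lt_one (hw : ∀ e, 0 ≤ w e) (hsum : Summable w) {r : ℝ} (hr : 0 ≤ r)
    (hWr : (∑' e, w e) * r < 1) (p : PrimeIdx G) : p.wgt w * r ^ p.len < 1 := calc
  p.wgt w * r ^ p.len ≤ (∑' e, w e) ^ p.len * r ^ p.len := by
    gcongr
    exact wgt_le hw hsum p
  _ = ((∑' e, w e) * r) ^ p.len := (mul_pow _ _ _).symm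
  _ < 1 := pow_lt_one₀ (mul_nonneg (tsum_nonneg hw) hr) hWr p.1.2.ne'

theorem summable_wgt_mul_pow (hw : ∀ e, 0 ≤ w e) (hsum : Summable w) {r : ℝ} (hr : 0 ≤ r)
    (hWr : (∑' e, w e) * r < 1) : Summable fun p : PrimeIdx G => p.wgt w * r ^ p.len := by
  have hterm_nonneg (p : PrimeIdx G) : 0 ≤ p.wgt w * r ^ p.len :=
    mul_nonneg (wgt_nonneg hw p) (pow_nonneg hr _)
  have hlevel (n : {n : ℕ // 0 < n}) (S : Finset (PrimeCycles G n.1)) :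
      ∑ q ∈ S, wgt w ⟨n, q⟩ * r ^ n.1 ≤ ((∑' e, w e) * r) ^ n.1 := by
    have : NeZero n.1 := ⟨n.2.ne'⟩
    rw [← Finset.sum_mul, mul_pow]
    exact mul_le_mul_of_nonneg_right (PrimeCycles.sum_liftWgt_le w hw hsum S) (pow_nonneg hr _)
  have hlevel_summable (n : {n : ℕ // 0 < n}) :
      Summable fun q : PrimeCycles G n.1 => wgt w ⟨n, q⟩ * r ^ n.1 :=
    summable_of_sum_le (fun q => hterm_nonneg ⟨n, q⟩) (hlevel n)
  have hgeom : Summable fun n : {n : ℕ // 0 < n} => ((∑' e, w e) * r) ^ n.1 :=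
    (summable_geometric_of_lt_one (mul_nonneg (tsum_nonneg hw) hr) hWr).subtype _
  refine (summable_sigma_of_nonneg hterm_nonneg).mpr ⟨hlevel_summable, ?_⟩
  exact hgeom.of_nonneg_of_le (fun n => tsum_nonneg fun q => hterm_nonneg ⟨n, q⟩)
    fun n => (hlevel_summable n).tsum_le_of_sum_le (hlevel n)

end PrimeIdx

theorem statement_2_general (G : SimpleGraph V)
    (w : G.Dart → ℝ) (hw : ∀ e, 0 < w e) (hsum : Summable w) :
    ∃ ε > (0 : ℝ), ∀ u : ℂ, ‖u‖ < ε →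
      Summable (fun p : PrimeIdx G => ‖(PrimeIdx.wgt w p : ℂ) * u ^ PrimeIdx.len p‖) ∧
      Multipliable (fun p : PrimeIdx G => 1 - (PrimeIdx.wgt w p : ℂ) * u ^ PrimeIdx.len p) ∧
      ∏' p : PrimeIdx G, (1 - (PrimeIdx.wgt w p : ℂ) * u ^ PrimeIdx.len p) ≠ 0 := by
  have hw' (e : G.Dart) : 0 ≤ w e := (hw e).le
  set W := ∑' e, w e
  have hW : 0 ≤ W := tsum_nonneg hw'
  refine ⟨(W + 1)⁻¹, by positivity, fun u hu => ?_⟩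
  have hWu : W * ‖u‖ < 1 := calc
    W * ‖u‖ ≤ (W + 1) * ‖u‖ := by gcongr; linarith
    _ < (W + 1) * (W + 1)⁻¹ := by gcongr
    _ = 1 := mul_inv_cancel₀ (by positivity)
  have hnorm (p : PrimeIdx G) : ‖(p.wgt w : ℂ) * u ^ p.len‖ = p.wgt w * ‖u‖ ^ p.len := by
    rw [norm_mul, norm_pow, Complex.norm_real, Real.norm_of_nonneg (p.wgt_nonneg hw')]
  have hsummable : Summable fun p : PrimeIdx G => ‖(p.wgt w : ℂ) * u ^ p.len‖ := by
    simpa only [hnorm] using PrimeIdx.summable_wgt_mul_pow hw' hsum (norm_nonneg u) hWu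
  have hfactor_ne (p : PrimeIdx G) : 1 + -((p.wgt w : ℂ) * u ^ p.len) ≠ 0 := by
    intro h
    have hlt := PrimeIdx.wgt_mul_pow_lt_one hw' hsum (norm_nonneg u) hWu p
    rw [← hnorm, show (p.wgt w : ℂ) * u ^ p.len = 1 by linear_combination -h] at hlt
    simp at hlt
  simp only [sub_eq_add_neg]
  exact ⟨hsummable, multipliable_one_add_of_summable (by simpa only [norm_neg] using hsummable),
    tprod_one_add_ne_zero_of_summable hfactor_ne (by simpa only [norm_neg] using hsummable)⟩

/-- For `|u|` small, the family `(w(p)u^{l(p)})_p` over prime cycles is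
absolutely summable and the Euler product `Π_p (1 − w(p)u^{l(p)})` converges with nonzero
value. -/
theorem statement_2 (G : SimpleGraph V) (hconn : G.Connected)
    (M : ℝ) (hM : 0 < M)
    (hval : ∀ x : V, (G.neighborSet x).Finite ∧ ((G.neighborSet x).ncard : ℝ) ≤ M)
    (w : G.Dart → ℝ) (hw : ∀ e, 0 < w e) (hsum : Summable w) :
    ∃ ε > (0 : ℝ), ∀ u : ℂ, ‖u‖ < ε →
      Summable (fun p : PrimeIdx G => ‖(PrimeIdx.wgt w p : ℂ) * u ^ PrimeIdx.len p‖) ∧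
      Multipliable (fun p : PrimeIdx G => 1 - (PrimeIdx.wgt w p : ℂ) * u ^ PrimeIdx.len p) ∧
      ∏' p : PrimeIdx G, (1 - (PrimeIdx.wgt w p : ℂ) * u ^ PrimeIdx.len p) ≠ 0 :=
  statement_2_general G w hw hsum
end

section
/- There exists ε > 0 such that for every real u with 0 ≤ u < ε: Σ_p ( − log(1 − w(p)u^{l(p)}) ) = Σ_{m=1}^∞ N_m uᵐ/m, where the left sum runs over all prime cycles p; equivalently, u·Z′(u)/Z(u) = Σ_{m=1}^∞ N_m uᵐ on (0, ε). -/
/- Formalization of a statement from "Ihara Zeta functions of infinite weighted graphs"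
   (A. Deitmar).  Context: `X` is a connected graph of bounded valency, `w` is a positive
   weight function on oriented edges (darts) with finite total weight. -/

open scoped BigOperators
open SimpleGraph

attribute [local instance 10] Classical.propDecidable
variable {V : Type*}

/-- `Npaths G w m` = `N_m`, the sum of the weights of all closed reduced paths of length `m`
without tail. -/
noncomputable def Npaths (G : SimpleGraph V) (w : G.Dart → ℝ) (m : ℕ) : ℝ :=
  if h : m = 0 then 0 else
    haveI : NeZero m := ⟨h⟩
    ∑' p : {f : ZMod m → V // ClosedRedP G m f}, cycW G w m p.1 p.2.1

section Periods

variable {V : Type*}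

/-- `t` is a (natural) period of the cyclic sequence `f`. -/
def Per {m : ℕ} (f : ZMod m → V) (t : ℕ) : Prop :=
  ∀ i : ZMod m, f (i + (t : ZMod m)) = f i

lemma per_self {m : ℕ} (f : ZMod m → V) : Per f m := by
  intro i; simp [ZMod.natCast_self]

lemma per_zero {m : ℕ} (f : ZMod m → V) : Per f 0 := by intro i; simp

lemma per_add {m : ℕ} {f : ZMod m → V} {a b : ℕ} (ha : Per f a) (hb : Per f b) :
    Per f (a + b) := by
  intro i
  have : ((a + b : ℕ) : ZMod m) = (a : ZMod m) + b := by push_cast; ring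
  rw [this, ← add_assoc]
  rw [show i + (a:ZMod m) + b = i + (b:ZMod m) + a by ring, ha, hb]

lemma per_mul {m : ℕ} {f : ZMod m → V} {a : ℕ} (ha : Per f a) (k : ℕ) :
    Per f (k * a) := by
  induction k with
  | zero => simpa using per_zero f
  | succ k ih => have := per_add ih ha; simpa [Nat.succ_mul] using this

lemma per_sub {m : ℕ} {f : ZMod m → V} {a b : ℕ} (hab : a ≤ b)
    (ha : Per f a) (hb : Per f b) : Per f (b - a) := by
  intro i
  have h1 : f (i + ((b - a : ℕ) : ZMod m) + (a : ZMod m)) = f (i + ((b - a : ℕ) : ZMod m)) :=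
    ha _
  have h2 : ((b - a : ℕ) : ZMod m) + (a : ZMod m) = (b : ZMod m) := by
    rw [← Nat.cast_add, Nat.sub_add_cancel hab]
  rw [add_assoc, h2] at h1
  rw [← h1, hb]

lemma per_mod {m : ℕ} {f : ZMod m → V} {a b : ℕ} (ha : Per f a) (hb : Per f b) :
    Per f (b % a) := by
  rcases Nat.eq_zero_or_pos a with h | h
  · simpa [h] using hb
  · have h1 : a * (b / a) ≤ b := Nat.mul_div_le b a
    have h2 : b % a = b - a * (b / a) := by
      have := Nat.mod_add_div b a; omega
    rw [h2]
    exact per_sub h1 (by simpa [mul_comm] using per_mul ha (b / a)) hb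

variable {m : ℕ} [NeZero m]

/-- The least positive period. -/
noncomputable def lper (f : ZMod m → V) : ℕ :=
  Nat.find (⟨m, Nat.pos_of_ne_zero (NeZero.ne m), per_self f⟩ : ∃ t, 0 < t ∧ Per f t)

lemma lper_pos (f : ZMod m → V) : 0 < lper f :=
  (Nat.find_spec (⟨m, Nat.pos_of_ne_zero (NeZero.ne m), per_self f⟩ : ∃ t, 0 < t ∧ Per f t)).1

lemma lper_per (f : ZMod m → V) : Per f (lper f) :=
  (Nat.find_spec (⟨m, Nat.pos_of_ne_zero (NeZero.ne m), per_self f⟩ : ∃ t, 0 < t ∧ Per f t)).2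

lemma lper_le {f : ZMod m → V} {t : ℕ} (ht : 0 < t) (h : Per f t) : lper f ≤ t :=
  Nat.find_le ⟨ht, h⟩

lemma lper_dvd {f : ZMod m → V} {t : ℕ} (h : Per f t) : lper f ∣ t := by
  have hmod : Per f (t % lper f) := per_mod (lper_per f) h
  by_contra hdvd
  have hpos : 0 < t % lper f := Nat.pos_of_ne_zero fun h0 => hdvd (Nat.dvd_of_mod_eq_zero h0)
  have hlt : t % lper f < lper f := Nat.mod_lt _ (lper_pos f)
  exact absurd (lper_le hpos hmod) (not_le.mpr hlt)

lemma lper_dvd_self (f : ZMod m → V) : lper f ∣ m := lper_dvd (per_self f)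

end Periods
section Proj

variable {V : Type*}

/-- The projection `ZMod m → ZMod d` for `d ∣ m`. -/
noncomputable def pr {d m : ℕ} (hdm : d ∣ m) : ZMod m → ZMod d :=
  ZMod.castHom hdm (ZMod d)

lemma pr_natCast {d m : ℕ} (hdm : d ∣ m) (t : ℕ) : pr hdm ((t : ℕ) : ZMod m) = (t : ZMod d) := by
  unfold pr; exact map_natCast (ZMod.castHom hdm (ZMod d)) t

lemma pr_add {d m : ℕ} (hdm : d ∣ m) (i j : ZMod m) :
    pr hdm (i + j) = pr hdm i + pr hdm j := map_add (ZMod.castHom hdm (ZMod d)) i j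

lemma pr_sub {d m : ℕ} (hdm : d ∣ m) (i j : ZMod m) :
    pr hdm (i - j) = pr hdm i - pr hdm j := map_sub (ZMod.castHom hdm (ZMod d)) i j

lemma pr_one {d m : ℕ} (hdm : d ∣ m) : pr hdm (1 : ZMod m) = 1 :=
  map_one (ZMod.castHom hdm (ZMod d))

lemma pr_val {d m : ℕ} [NeZero m] (hdm : d ∣ m) (i : ZMod m) :
    pr hdm i = ((i.val : ℕ) : ZMod d) := by
  unfold pr
  rw [ZMod.castHom_apply, ZMod.natCast_val]

/-- Restriction of a cyclic sequence to `ZMod d`. -/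
noncomputable def restr {m : ℕ} [NeZero m] (d : ℕ) (f : ZMod m → V) : ZMod d → V :=
  fun j => f ((j.val : ℕ) : ZMod m)

lemma pr_section {d m : ℕ} [NeZero d] (hdm : d ∣ m) (j : ZMod d) :
    pr hdm ((j.val : ℕ) : ZMod m) = j := by
  rw [pr_natCast, ZMod.natCast_rightInverse j]

/-- The key factorization: if `d` is a period of `f`, then `f` factors through `pr`. -/
lemma factor_eq {m d : ℕ} [NeZero m] [NeZero d] (hdm : d ∣ m) {f : ZMod m → V}
    (hPer : Per f d) (i : ZMod m) : restr d f (pr hdm i) = f i := by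
  unfold restr
  rw [pr_val hdm i, ZMod.val_natCast]
  have hi : i = ((i.val : ℕ) : ZMod m) := (ZMod.natCast_rightInverse i).symm
  conv_rhs => rw [hi]
  have hdecomp : i.val = i.val % d + d * (i.val / d) := by
    have := Nat.mod_add_div i.val d; omega
  have hper : Per f (d * (i.val / d)) := by
    simpa [mul_comm] using per_mul hPer (i.val / d)
  calc f ((↑(i.val % d) : ZMod m)) = f ((↑(i.val % d) : ZMod m) + ((d * (i.val / d) : ℕ) : ZMod m)) :=
        (hper _).symm
    _ = f ((i.val : ℕ) : ZMod m) := by rw [← Nat.cast_add, ← hdecomp]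

/-- Conversely a function factoring through `pr` has period `d`. -/
lemma per_of_factor {m d : ℕ} (hdm : d ∣ m) (g : ZMod d → V) :
    Per (fun i => g (pr hdm i)) d := by
  intro i
  simp only [pr_add, pr_natCast]
  simp [ZMod.natCast_self]

end Proj
section ProdLem

lemma cast_fin_bijective {d : ℕ} [NeZero d] :
    Function.Bijective (fun a : Fin d => ((a.1 : ℕ) : ZMod d)) := by
  rw [Fintype.bijective_iff_injective_and_card]
  constructor
  · intro a b hab
    have := congrArg ZMod.val hab
    simpa [ZMod.val_natCast, Nat.mod_eq_of_lt a.2, Nat.mod_eq_of_lt b.2, Fin.ext_iff] using this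
  · simp [ZMod.card]

/-- Key counting lemma: a product over `ZMod m` of a function factoring through
`ZMod d` (`d ∣ m`) is the `m/d` power of the product over `ZMod d`. -/
lemma prod_pr_pow {M : Type*} [CommMonoid M] {d m : ℕ} [NeZero d] [NeZero m]
    (hdm : d ∣ m) (h : ZMod d → M) :
    ∏ i : ZMod m, h (pr hdm i) = (∏ j : ZMod d, h j) ^ (m / d) := by
  set k := m / d with hk
  have hdk : d * k = m := Nat.mul_div_cancel' hdm
  have hφbij : Function.Bijective
      (fun ab : Fin d × Fin k => ((ab.1.1 + ab.2.1 * d : ℕ) : ZMod m)) := by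
    rw [Fintype.bijective_iff_injective_and_card]
    constructor
    · rintro ⟨a, b⟩ ⟨a', b'⟩ hab
      have hlt : ∀ (x : Fin d) (y : Fin k), x.1 + y.1 * d < m := by
        rintro ⟨x, hx⟩ ⟨y, hy⟩
        dsimp only
        have h1 : x + y * d < (y + 1) * d := by
          have : (y + 1) * d = y * d + d := by ring
          omega
        have h2 : (y + 1) * d ≤ k * d := Nat.mul_le_mul_right d (by omega)
        have h3 : k * d = m := by rw [mul_comm]; exact hdk
        omega
      have := congrArg ZMod.val hab
      rw [ZMod.val_natCast, ZMod.val_natCast, Nat.mod_eq_of_lt (hlt a b),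
        Nat.mod_eq_of_lt (hlt a' b')] at this
      have ha : a.1 = a'.1 := by
        have h1 := congrArg (· % d) this
        simpa [Nat.add_mul_mod_self_right, Nat.mod_eq_of_lt a.2, Nat.mod_eq_of_lt a'.2] using h1
      have hb : b.1 = b'.1 := by
        have hd0 : 0 < d := Nat.pos_of_ne_zero (NeZero.ne d)
        have hbd : b.1 * d = b'.1 * d := by omega
        exact Nat.eq_of_mul_eq_mul_right hd0 hbd
      exact Prod.ext (Fin.ext ha) (Fin.ext hb)
    · simp [ZMod.card, hdk]
  calc ∏ i : ZMod m, h (pr hdm i)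
      = ∏ ab : Fin d × Fin k, h (pr hdm ((ab.1.1 + ab.2.1 * d : ℕ) : ZMod m)) :=
        (Fintype.prod_bijective _ hφbij _ _ (fun ab => rfl)).symm
    _ = ∏ ab : Fin d × Fin k, h ((ab.1.1 : ℕ) : ZMod d) := by
        refine Fintype.prod_congr _ _ fun ab => ?_
        congr 1
        rw [pr_natCast]
        push_cast [ZMod.natCast_self]
        ring
    _ = ∏ a : Fin d, (h ((a.1 : ℕ) : ZMod d)) ^ k := by
        rw [Fintype.prod_prod_type]
        exact Fintype.prod_congr _ _ fun a => by simp
    _ = (∏ j : ZMod d, h j) ^ (m / d) := by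
        rw [← Finset.prod_pow]
        exact Fintype.prod_bijective _ cast_fin_bijective _ _ (fun a => rfl)

/-- Sum over all functions of a product of weights, in `ℝ≥0∞`. -/
lemma tsum_pi_prod {α : Type*} (F : α → ENNReal) :
    ∀ (n : ℕ), ∑' h : Fin n → α, ∏ i, F (h i) = (∑' a, F a) ^ n := by
  intro n
  induction n with
  | zero =>
      rw [pow_zero]
      rw [tsum_eq_single (fun i => i.elim0) (fun b hb => absurd (funext fun i => i.elim0) hb)]
      simp
  | succ n ih =>
      rw [← (Fin.consEquiv (fun _ : Fin (n+1) => α)).tsum_eq, ENNReal.tsum_prod']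
      have key : ∀ (a : α) (t : Fin n → α),
          (∏ i, F ((Fin.consEquiv (fun _ : Fin (n+1) => α)) (a, t) i)) = F a * ∏ i, F (t i) := by
        intro a t
        rw [Fin.prod_univ_succ]
        simp [Fin.consEquiv]
      calc (∑' (a : α) (t : Fin n → α), ∏ i, F ((Fin.consEquiv (fun _ : Fin (n+1) => α)) (a, t) i))
          = ∑' (a : α) (t : Fin n → α), F a * ∏ i, F (t i) := by
            congr 1; funext a; congr 1; funext t; exact key a t
        _ = ∑' (a : α), F a * ∑' t : Fin n → α, ∏ i, F (t i) := by
            congr 1; funext a; exact ENNReal.tsum_mul_left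
        _ = (∑' a, F a) * (∑' a, F a) ^ n := by
            rw [← ih]; exact ENNReal.tsum_mul_right
        _ = (∑' a, F a) ^ (n + 1) := by ring

lemma tsum_pi_prod' {α ι : Type*} [Fintype ι] (F : α → ENNReal) :
    ∑' h : ι → α, ∏ i, F (h i) = (∑' a, F a) ^ (Fintype.card ι) := by
  classical
  rw [← (Equiv.arrowCongr (Fintype.equivFin ι).symm (Equiv.refl α)).tsum_eq,
    ← tsum_pi_prod F (Fintype.card ι)]
  refine tsum_congr fun x => ?_
  exact Fintype.prod_bijective (Fintype.equivFin ι) (Fintype.equivFin ι).bijective _ _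
    (fun i => by simp [Equiv.arrowCongr])

end ProdLem
section GraphLem

variable {V : Type*} {G : SimpleGraph V}

lemma closedRedP_factor {m d : ℕ} [NeZero m] [NeZero d] (hdm : d ∣ m)
    {g : ZMod d → V} (hg : ClosedRedP G d g) :
    ClosedRedP G m (fun i => g (pr hdm i)) := by
  constructor
  · intro i
    have h1 : pr hdm (i + 1) = pr hdm i + 1 := by rw [pr_add, pr_one]
    dsimp only
    rw [h1]
    exact hg.1 (pr hdm i)
  · intro i
    have h1 : pr hdm (i + 1) = pr hdm i + 1 := by rw [pr_add, pr_one]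
    have h2 : pr hdm (i - 1) = pr hdm i - 1 := by rw [pr_sub, pr_one]
    dsimp only
    rw [h1, h2]
    exact hg.2 (pr hdm i)

lemma closedRedP_restr {m d : ℕ} [NeZero m] [NeZero d] (hdm : d ∣ m)
    {f : ZMod m → V} (hPer : Per f d) (hf : ClosedRedP G m f) :
    ClosedRedP G d (restr d f) := by
  constructor
  · intro j
    set i : ZMod m := ((j.val : ℕ) : ZMod m) with hi
    have e0 : restr d f j = f i := rfl
    have e1 : restr d f (j + 1) = f (i + 1) := by
      have : pr hdm (i + 1) = j + 1 := by rw [pr_add, pr_one, pr_section hdm]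
      rw [← this, factor_eq hdm hPer]
    rw [e0, e1]
    exact hf.1 i
  · intro j
    set i : ZMod m := ((j.val : ℕ) : ZMod m) with hi
    have e1 : restr d f (j + 1) = f (i + 1) := by
      have : pr hdm (i + 1) = j + 1 := by rw [pr_add, pr_one, pr_section hdm]
      rw [← this, factor_eq hdm hPer]
    have e2 : restr d f (j - 1) = f (i - 1) := by
      have : pr hdm (i - 1) = j - 1 := by rw [pr_sub, pr_one, pr_section hdm]
      rw [← this, factor_eq hdm hPer]
    rw [e1, e2]
    exact hf.2 i

lemma restr_primitive {m : ℕ} [NeZero m] (f : ZMod m → V) [NeZero (lper f)] :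
    IsPrimitive (lper f) (restr (lper f) f) := by
  rintro ⟨e, he0, hed, hedvd, hshift⟩
  have hPer : Per f e := by
    intro i
    have h1 : restr (lper f) f (pr (lper_dvd_self f) (i + (e : ZMod m))) = f (i + e) :=
      factor_eq _ (lper_per f) _
    rw [← h1, pr_add, pr_natCast, hshift, factor_eq _ (lper_per f)]
  exact absurd (lper_le he0 hPer) (not_le.mpr hed)

lemma lper_factor {m d : ℕ} [NeZero m] [NeZero d] (hdm : d ∣ m)
    {g : ZMod d → V} (hprim : IsPrimitive d g) :
    lper (fun i : ZMod m => g (pr hdm i)) = d := by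
  set f : ZMod m → V := fun i => g (pr hdm i) with hf
  have hPerd : Per f d := per_of_factor hdm g
  have hdvd : lper f ∣ d := lper_dvd hPerd
  have hle : lper f ≤ d := Nat.le_of_dvd (Nat.pos_of_ne_zero (NeZero.ne d)) hdvd
  rcases lt_or_eq_of_le hle with hlt | heq
  · exfalso
    apply hprim
    refine ⟨lper f, lper_pos f, hlt, hdvd, fun j => ?_⟩
    have hsec : pr hdm ((j.val : ℕ) : ZMod m) = j := pr_section hdm j
    have : g (pr hdm (((j.val : ℕ) : ZMod m) + ((lper f : ℕ) : ZMod m))) =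
        g (pr hdm ((j.val : ℕ) : ZMod m)) := lper_per f _
    rw [pr_add, pr_natCast, pr_natCast, ZMod.natCast_rightInverse j] at this
    exact this
  · exact heq

lemma prim_stab {n : ℕ} [NeZero n] {f : ZMod n → V} (hprim : IsPrimitive n f)
    {x : ZMod n} (hx : ∀ i, f (i + x) = f i) : x = 0 := by
  by_contra hx0
  have hPer : Per f x.val := by
    intro i
    rw [ZMod.natCast_rightInverse x]
    exact hx i
  have hvpos : 0 < x.val := by
    rcases Nat.eq_zero_or_pos x.val with h | h
    · exact absurd (by rw [← ZMod.natCast_rightInverse x, h, Nat.cast_zero]) hx0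
    · exact h
  have hvlt : x.val < n := ZMod.val_lt x
  apply hprim
  refine ⟨lper f, lper_pos f, lt_of_le_of_lt (lper_le hvpos hPer) hvlt, lper_dvd_self f,
    fun i => lper_per f i⟩

/-- Shift of a cyclic sequence. -/
def shf {n : ℕ} (k : ZMod n) (f : ZMod n → V) : ZMod n → V := fun i => f (i + k)

lemma closedRedP_shf {n : ℕ} (k : ZMod n) {f : ZMod n → V} (hf : ClosedRedP G n f) :
    ClosedRedP G n (shf k f) := by
  constructor
  · intro i
    have := hf.1 (i + k)
    simpa [shf, add_right_comm i k 1] using this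
  · intro i
    have := hf.2 (i + k)
    have h1 : i - 1 + k = i + k - 1 := by ring
    have h2 : i + 1 + k = i + k + 1 := by ring
    simpa [shf, h1, h2] using this

lemma isPrimitive_shf {n : ℕ} (k : ZMod n) {f : ZMod n → V} (hf : IsPrimitive n f) :
    IsPrimitive n (shf k f) := by
  rintro ⟨e, he0, hen, hedvd, hshift⟩
  apply hf
  refine ⟨e, he0, hen, hedvd, fun i => ?_⟩
  have := hshift (i - k)
  simpa [shf, sub_add_cancel, add_right_comm] using this

lemma primeP_shf {n : ℕ} (k : ZMod n) {f : ZMod n → V} (hf : PrimeP G n f) :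
    PrimeP G n (shf k f) := ⟨closedRedP_shf k hf.1, isPrimitive_shf k hf.2⟩

end GraphLem
section DecompEquiv

variable {V : Type*} (G : SimpleGraph V)

/-- Index type of all (not nec. primitive) cycles: closed reduced tailless paths. -/
def CIdx := Σ m : {n : ℕ // 0 < n}, {f : ZMod m.1 → V // ClosedRedP G m.1 f}

/-- Index type of pairs (primitive path, power). -/
def PIdx2 := Σ d : {n : ℕ // 0 < n}, {g : ZMod d.1 → V // PrimeP G d.1 g} × {k : ℕ // 0 < k}

variable {G}

noncomputable def fwd (x : CIdx G) : PIdx2 G :=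
  haveI : NeZero x.1.1 := ⟨x.1.2.ne'⟩
  haveI : NeZero (lper x.2.1) := ⟨(lper_pos x.2.1).ne'⟩
  ⟨⟨lper x.2.1, lper_pos x.2.1⟩,
    (⟨restr (lper x.2.1) x.2.1,
      closedRedP_restr (lper_dvd_self x.2.1) (lper_per x.2.1) x.2.2,
      restr_primitive x.2.1⟩,
     ⟨x.1.1 / lper x.2.1,
      Nat.div_pos (Nat.le_of_dvd x.1.2 (lper_dvd_self x.2.1)) (lper_pos x.2.1)⟩)⟩

noncomputable def bwd (y : PIdx2 G) : CIdx G :=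
  haveI : NeZero y.1.1 := ⟨y.1.2.ne'⟩
  haveI : NeZero (y.1.1 * y.2.2.1) := ⟨Nat.mul_ne_zero y.1.2.ne' y.2.2.2.ne'⟩
  ⟨⟨y.1.1 * y.2.2.1, Nat.mul_pos y.1.2 y.2.2.2⟩,
    ⟨fun i => y.2.1.1 (pr (Dvd.intro y.2.2.1 rfl) i),
      closedRedP_factor (Dvd.intro y.2.2.1 rfl) y.2.1.2.1⟩⟩

lemma sigma_ext_nat {β : ℕ → Type*} {a b : {n : ℕ // 0 < n}} {x : β a.1} {y : β b.1}
    (h : a.1 = b.1) (hxy : HEq x y) :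
    (⟨a, x⟩ : Σ n : {n : ℕ // 0 < n}, β n.1) = ⟨b, y⟩ := by
  obtain ⟨a, ha⟩ := a; obtain ⟨b, hb⟩ := b
  dsimp only at h x y
  subst h
  cases hxy
  rfl

lemma heq_subtype_fun {P : ∀ n : ℕ, (ZMod n → V) → Prop} {m m' : ℕ} [NeZero m]
    (h : m' = m) (F : {f : ZMod m' → V // P m' f}) (f : {f : ZMod m → V // P m f})
    (hvals : ∀ i : ℕ, F.1 ((i : ZMod m')) = f.1 ((i : ZMod m))) : HEq F f := by
  subst h
  refine heq_of_eq (Subtype.ext (funext fun i => ?_))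
  have := hvals i.val
  rwa [ZMod.natCast_rightInverse i] at this

lemma heq_pair_fun {Q : ∀ n : ℕ, (ZMod n → V) → Prop} {d d' : ℕ} [NeZero d]
    (h : d' = d) (g' : {g : ZMod d' → V // Q d' g}) (g : {g : ZMod d → V // Q d g})
    (k' k : {k : ℕ // 0 < k})
    (hg : ∀ i : ℕ, g'.1 ((i : ZMod d')) = g.1 ((i : ZMod d))) (hk : k'.1 = k.1) :
    HEq (g', k') (g, k) := by
  subst h
  refine heq_of_eq (Prod.ext ?_ (Subtype.ext hk))
  refine Subtype.ext (funext fun i => ?_)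
  have := hg i.val
  rwa [ZMod.natCast_rightInverse i] at this

lemma bwd_fwd (x : CIdx G) : bwd (fwd x) = x := by
  obtain ⟨⟨m, hm⟩, f, hf⟩ := x
  haveI : NeZero m := ⟨hm.ne'⟩
  set d := lper f with hd
  haveI : NeZero d := ⟨(lper_pos f).ne'⟩
  have hdm : d ∣ m := lper_dvd_self f
  have hmd : d * (m / d) = m := Nat.mul_div_cancel' hdm
  refine sigma_ext_nat (β := fun n => {f : ZMod n → V // ClosedRedP G n f}) hmd ?_
  refine heq_subtype_fun (P := fun n g => ClosedRedP G n g) hmd _ _ fun i => ?_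
  show restr d f (pr (Dvd.intro (m / d) rfl) ((i : ZMod (d * (m / d))))) = f ((i : ZMod m))
  rw [pr_natCast, ← pr_natCast hdm, factor_eq hdm (lper_per f)]

lemma fwd_bwd (y : PIdx2 G) : fwd (bwd y) = y := by
  obtain ⟨⟨d, hd⟩, ⟨g, hg⟩, ⟨k, hk⟩⟩ := y
  haveI : NeZero d := ⟨hd.ne'⟩
  haveI : NeZero (d * k) := ⟨Nat.mul_ne_zero hd.ne' hk.ne'⟩
  have hdm : d ∣ d * k := Dvd.intro k rfl
  set f : ZMod (d * k) → V := fun i => g (pr hdm i) with hfdef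
  have hlp : lper f = d := lper_factor hdm hg.2
  haveI : NeZero (lper f) := ⟨(lper_pos f).ne'⟩
  refine sigma_ext_nat (β := fun n => {g : ZMod n → V // PrimeP G n g} × {k : ℕ // 0 < k}) hlp ?_
  refine heq_pair_fun (Q := fun n g => PrimeP G n g) hlp _ _ _ _ (fun i => ?_) ?_
  · show restr (lper f) f ((i : ZMod (lper f))) = g ((i : ZMod d))
    rw [← pr_natCast (lper_dvd_self f), factor_eq (lper_dvd_self f) (lper_per f)]
    show g (pr hdm ((i : ZMod (d * k)))) = g ((i : ZMod d))
    rw [pr_natCast]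
  · show d * k / lper f = k
    rw [hlp, Nat.mul_div_cancel_left k (Nat.pos_of_ne_zero (NeZero.ne d))]

/-- The decomposition of cycles as powers of primitive cycles. -/
noncomputable def decompEquiv (G : SimpleGraph V) : CIdx G ≃ PIdx2 G :=
  ⟨fwd, bwd, bwd_fwd, fwd_bwd⟩

end DecompEquiv
section Weights

variable {V : Type*} {G : SimpleGraph V} (w : G.Dart → ℝ)

/-- `ℝ≥0∞`-valued weight of a cyclic path. -/
noncomputable def cycE (n : ℕ) [NeZero n] (f : ZMod n → V)
    (h : ∀ i, G.Adj (f i) (f (i + 1))) : ENNReal :=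
  ∏ i : ZMod n, ENNReal.ofReal (w ⟨(f i, f (i + 1)), h i⟩)

lemma cycE_eq_ofReal (hw : ∀ e, 0 ≤ w e) (n : ℕ) [NeZero n] (f : ZMod n → V)
    (h : ∀ i, G.Adj (f i) (f (i + 1))) :
    cycE w n f h = ENNReal.ofReal (cycW G w n f h) := by
  unfold cycE cycW
  rw [ENNReal.ofReal_prod_of_nonneg (fun i _ => hw _)]

lemma cycE_congr {n : ℕ} [NeZero n] {f f' : ZMod n → V} (hff : f = f')
    (h : ∀ i, G.Adj (f i) (f (i + 1))) (h' : ∀ i, G.Adj (f' i) (f' (i + 1))) :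
    cycE w n f h = cycE w n f' h' := by subst hff; rfl

lemma cycE_factor {m d : ℕ} [NeZero m] [NeZero d] (hdm : d ∣ m) (g : ZMod d → V)
    (h : ∀ j, G.Adj (g j) (g (j + 1)))
    (hfac : ∀ i : ZMod m, G.Adj ((fun i => g (pr hdm i)) i) ((fun i => g (pr hdm i)) (i + 1))) :
    cycE w m (fun i => g (pr hdm i)) hfac = (cycE w d g h) ^ (m / d) := by
  unfold cycE
  rw [← prod_pr_pow hdm (fun j => ENNReal.ofReal (w ⟨(g j, g (j + 1)), h j⟩))]
  refine Fintype.prod_congr _ _ fun i => ?_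
  have hd : (⟨((fun i => g (pr hdm i)) i, (fun i => g (pr hdm i)) (i + 1)), hfac i⟩ : G.Dart)
      = ⟨(g (pr hdm i), g (pr hdm i + 1)), h (pr hdm i)⟩ := by
    apply SimpleGraph.Dart.ext
    dsimp only
    rw [pr_add, pr_one]
  rw [hd]

/-- Sum of weights of closed reduced paths of length `m` is at most `S^m`. -/
lemma tsum_cycE_le (m : ℕ) [NeZero m] :
    ∑' p : {f : ZMod m → V // ClosedRedP G m f}, cycE w m p.1 p.2.1
      ≤ (∑' e : G.Dart, ENNReal.ofReal (w e)) ^ m := by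
  have hinj : Function.Injective
      (fun p : {f : ZMod m → V // ClosedRedP G m f} =>
        (fun i : ZMod m => (⟨(p.1 i, p.1 (i + 1)), p.2.1 i⟩ : G.Dart))) := by
    intro p q h
    apply Subtype.ext; funext i
    exact congrArg (fun dd : G.Dart => dd.1.1) (congrFun h i)
  calc ∑' p : {f : ZMod m → V // ClosedRedP G m f}, cycE w m p.1 p.2.1
      ≤ ∑' h : ZMod m → G.Dart, ∏ i, ENNReal.ofReal (w (h i)) :=
        ENNReal.tsum_comp_le_tsum_of_injective hinj _
    _ = (∑' e : G.Dart, ENNReal.ofReal (w e)) ^ (Fintype.card (ZMod m)) :=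
        tsum_pi_prod' (ι := ZMod m) (fun e => ENNReal.ofReal (w e))
    _ = _ := by rw [ZMod.card]

/-- The log power series, `ℝ≥0∞` version. -/
lemma ofReal_neg_log_eq (x : ℝ) (h0 : 0 ≤ x) (h1 : x < 1) :
    ENNReal.ofReal (-Real.log (1 - x))
      = ∑' k : ℕ, ENNReal.ofReal x ^ (k + 1) / ((k : ENNReal) + 1) := by
  have hs := Real.hasSum_pow_div_log_of_abs_lt_one (x := x) (by rwa [abs_of_nonneg h0])
  rw [← hs.tsum_eq, ENNReal.ofReal_tsum_of_nonneg (fun n => by positivity) hs.summable]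
  refine tsum_congr fun k => ?_
  rw [ENNReal.ofReal_div_of_pos (by positivity), ENNReal.ofReal_pow h0]
  congr 1
  have h2 : ((k : ℝ) + 1) = ((k + 1 : ℕ) : ℝ) := by push_cast; ring
  rw [h2, ENNReal.ofReal_natCast]
  push_cast; ring

/-- Unfolding a `tsum` over prime cycles (the quotient) to one over primitive paths. -/
lemma tsum_quotient_eq {d : ℕ} [NeZero d] (F : PrimeCycles G d → ENNReal) :
    ∑' g : {g : ZMod d → V // PrimeP G d g},
        F (Quotient.mk (shiftSetoid d (PrimeP G d)) g)
      = (d : ENNReal) * ∑' c : PrimeCycles G d, F c := by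
  rw [← (Equiv.sigmaFiberEquiv
      (fun g : {g : ZMod d → V // PrimeP G d g} =>
        Quotient.mk (shiftSetoid d (PrimeP G d)) g)).tsum_eq
      (fun g => F (Quotient.mk (shiftSetoid d (PrimeP G d)) g)),
    ENNReal.tsum_sigma']
  rw [ENNReal.tsum_mul_left.symm]
  refine tsum_congr fun c => ?_
  have hconst : ∀ p : {g : {g : ZMod d → V // PrimeP G d g} //
      Quotient.mk (shiftSetoid d (PrimeP G d)) g = c},
      F (Quotient.mk (shiftSetoid d (PrimeP G d)) ((Equiv.sigmaFiberEquiv _) ⟨c, p⟩)) = F c :=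
    fun p => by rw [Equiv.sigmaFiberEquiv]; exact congrArg F p.2
  -- build the equiv between the fiber and `ZMod d`
  set rep := Quotient.out c with hrep
  have hout : Quotient.mk (shiftSetoid d (PrimeP G d)) rep = c := Quotient.out_eq c
  have φprop : ∀ k : ZMod d,
      Quotient.mk (shiftSetoid d (PrimeP G d)) (⟨shf k rep.1, primeP_shf k rep.2⟩ :
        {g : ZMod d → V // PrimeP G d g}) = c := by
    intro k
    rw [← hout]
    refine (Quotient.sound ?_).symm
    exact ⟨k, fun i => rfl⟩
  set φ : ZMod d → {g : {g : ZMod d → V // PrimeP G d g} //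
      Quotient.mk (shiftSetoid d (PrimeP G d)) g = c} :=
    fun k => ⟨⟨shf k rep.1, primeP_shf k rep.2⟩, φprop k⟩ with hφ
  have hφinj : Function.Injective φ := by
    intro k k' h
    have h2 : ∀ i, rep.1 (i + k) = rep.1 (i + k') := by
      intro i
      exact congrFun (congrArg (fun q => (q.1.1 : ZMod d → V)) h) i
    have h3 : ∀ i, rep.1 (i + (k - k')) = rep.1 i := by
      intro i
      have := h2 (i - k')
      rw [sub_add_cancel] at this
      rw [← this]
      ring_nf
    have := prim_stab rep.2.2 h3
    have h4 : k - k' = 0 := this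
    have : k = k' := by
      have := congrArg (· + k') h4
      simpa [sub_add_cancel] using this
    exact this
  have hφsurj : Function.Surjective φ := by
    rintro ⟨⟨g, hg⟩, hgc⟩
    letI : Setoid {g : ZMod d → V // PrimeP G d g} := shiftSetoid d (PrimeP G d)
    have hrel : Setoid.r rep (⟨g, hg⟩ : {g : ZMod d → V // PrimeP G d g}) :=
      Quotient.exact (hout.trans hgc.symm)
    obtain ⟨k, hk⟩ := hrel
    refine ⟨k, ?_⟩
    apply Subtype.ext
    apply Subtype.ext
    funext i
    exact (hk i).symm
  have e : ZMod d ≃ {g : {g : ZMod d → V // PrimeP G d g} //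
      Quotient.mk (shiftSetoid d (PrimeP G d)) g = c} :=
    Equiv.ofBijective φ ⟨hφinj, hφsurj⟩
  rw [← e.tsum_eq]
  have : ∀ k : ZMod d, F (Quotient.mk (shiftSetoid d (PrimeP G d))
      ((Equiv.sigmaFiberEquiv _) ⟨c, e k⟩)) = F c := fun k => hconst (e k)
  calc ∑' k : ZMod d, F (Quotient.mk (shiftSetoid d (PrimeP G d))
          ((Equiv.sigmaFiberEquiv _) ⟨c, e k⟩))
      = ∑' _ : ZMod d, F c := tsum_congr this
    _ = (d : ENNReal) * F c := by
        rw [tsum_fintype]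
        simp [ZMod.card, mul_comm]
end Weights
section Helpers

variable {V : Type*} {G : SimpleGraph V} (w : G.Dart → ℝ)

/-- The `ℕ ≃ {k // 0 < k}` equivalence. -/
def succEquiv : ℕ ≃ {k : ℕ // 0 < k} where
  toFun k := ⟨k + 1, Nat.succ_pos k⟩
  invFun k := k.1 - 1
  left_inv k := by simp
  right_inv k := by
    apply Subtype.ext
    dsimp only
    have := k.2
    omega

lemma ennreal_div_mul_div (a x b : ENNReal) (ha0 : a ≠ 0) (hat : a ≠ ⊤) :
    x / (a * b) = a⁻¹ * (x / b) := by
  rw [div_eq_mul_inv, div_eq_mul_inv, ENNReal.mul_inv (Or.inl ha0) (Or.inl hat)]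
  ring

lemma cycW_nonneg (hw0 : ∀ e, 0 ≤ w e) {n : ℕ} [NeZero n] (f : ZMod n → V)
    (h : ∀ i, G.Adj (f i) (f (i + 1))) : 0 ≤ cycW G w n f h :=
  Finset.prod_nonneg fun _ _ => hw0 _

lemma cycW_le (hw0 : ∀ e, 0 ≤ w e) (hsum : Summable w) {n : ℕ} [NeZero n]
    (f : ZMod n → V) (h : ∀ i, G.Adj (f i) (f (i + 1))) :
    cycW G w n f h ≤ (∑' e, w e) ^ n := by
  unfold cycW
  calc ∏ i : ZMod n, w ⟨(f i, f (i + 1)), h i⟩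
      ≤ ∏ _i : ZMod n, (∑' e, w e) :=
        Finset.prod_le_prod (fun i _ => hw0 _)
          (fun i _ => Summable.le_tsum hsum _ (fun _ _ => hw0 _))
    _ = (∑' e, w e) ^ n := by rw [Finset.prod_const, Finset.card_univ, ZMod.card]

lemma wgt_mk (n : ℕ) (hn : 0 < n) (g : {f : ZMod n → V // PrimeP G n f}) :
    PrimeIdx.wgt w ⟨⟨n, hn⟩, Quotient.mk (shiftSetoid n (PrimeP G n)) g⟩ =
      @cycW V G w n ⟨hn.ne'⟩ g.1 (fun i => g.2.1.1 i) := rfl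

lemma wgt_nonneg (hw0 : ∀ e, 0 ≤ w e) (p : PrimeIdx G) : 0 ≤ PrimeIdx.wgt w p := by
  obtain ⟨⟨n, hn⟩, c⟩ := p
  haveI : NeZero n := ⟨hn.ne'⟩
  refine Quotient.inductionOn c fun g => ?_
  rw [wgt_mk]
  exact cycW_nonneg w hw0 _ _

lemma wgt_le (hw0 : ∀ e, 0 ≤ w e) (hsum : Summable w) (p : PrimeIdx G) :
    PrimeIdx.wgt w p ≤ (∑' e, w e) ^ p.len := by
  obtain ⟨⟨n, hn⟩, c⟩ := p
  haveI : NeZero n := ⟨hn.ne'⟩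
  refine Quotient.inductionOn c fun g => ?_
  rw [wgt_mk]
  exact cycW_le w hw0 hsum _ _

variable (G)

/-- The `ℝ≥0∞` weight term attached to a pair (primitive path, power). -/
noncomputable def pterm (uE : ENNReal) (y : PIdx2 G) : ENNReal :=
  haveI : NeZero y.1.1 := ⟨y.1.2.ne'⟩
  (cycE w y.1.1 y.2.1.1 (fun i => y.2.1.2.1.1 i)) ^ y.2.2.1 * uE ^ (y.1.1 * y.2.2.1) /
    ((y.1.1 : ENNReal) * (y.2.2.1 : ENNReal))

/-- The `ℝ≥0∞` weight term attached to a cycle. -/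
noncomputable def cterm (uE : ENNReal) (x : CIdx G) : ENNReal :=
  haveI : NeZero x.1.1 := ⟨x.1.2.ne'⟩
  cycE w x.1.1 x.2.1 (fun i => x.2.2.1 i) * uE ^ x.1.1 / (x.1.1 : ENNReal)

/-- `N_m` as an `ℝ≥0∞`-valued sum. -/
noncomputable def NEfun (m : {n : ℕ // 0 < n}) : ENNReal :=
  haveI : NeZero m.1 := ⟨m.2.ne'⟩
  ∑' p : {f : ZMod m.1 → V // ClosedRedP G m.1 f}, cycE w m.1 p.1 (fun i => p.2.1 i)

variable {G}

/-- The key pointwise identity along the decomposition equivalence. -/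
lemma cterm_eq_pterm_fwd (uE : ENNReal) (x : CIdx G) :
    cterm G w uE x = pterm G w uE (fwd (G := G) x) := by
  obtain ⟨⟨m, hm⟩, f, hf⟩ := x
  haveI : NeZero m := ⟨hm.ne'⟩
  set d := lper f with hd
  haveI : NeZero d := ⟨(lper_pos f).ne'⟩
  have hdm : d ∣ m := lper_dvd_self f
  have hmd : d * (m / d) = m := Nat.mul_div_cancel' hdm
  unfold cterm pterm fwd
  dsimp only
  have hfun : f = fun i => restr d f (pr hdm i) := funext fun i => (factor_eq hdm (lper_per f) i).symm
  have hadj : ∀ j : ZMod d, G.Adj (restr d f j) (restr d f (j + 1)) :=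
    (closedRedP_restr hdm (lper_per f) hf).1
  have hfac : ∀ i : ZMod m, G.Adj ((fun i => restr d f (pr hdm i)) i)
      ((fun i => restr d f (pr hdm i)) (i + 1)) := by
    rw [← hfun]; exact hf.1
  have h1 : cycE w m f (fun i => hf.1 i) = (cycE w d (restr d f) hadj) ^ (m / d) := by
    rw [cycE_congr w hfun (fun i => hf.1 i) hfac]
    exact cycE_factor w hdm (restr d f) hadj hfac
  rw [h1, hmd]
  congr 1
  rw [← Nat.cast_mul, hmd]

end Helpers

/-- For small `u ≥ 0`:
`Σ_p −log(1 − w(p)u^{l(p)}) = Σ_{m≥1} N_m uᵐ/m` (i.e. `u·Z′(u)/Z(u) = Σ N_m uᵐ`). -/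
theorem statement_4 (G : SimpleGraph V) (hconn : G.Connected)
    (M : ℝ) (hM : 0 < M)
    (hval : ∀ x : V, (G.neighborSet x).Finite ∧ ((G.neighborSet x).ncard : ℝ) ≤ M)
    (w : G.Dart → ℝ) (hw : ∀ e, 0 < w e) (hsum : Summable w) :
    ∃ ε > (0 : ℝ), ∀ u : ℝ, 0 ≤ u → u < ε →
      Summable (fun p : PrimeIdx G =>
        -Real.log (1 - PrimeIdx.wgt w p * u ^ PrimeIdx.len p)) ∧
      Summable (fun m : ℕ => Npaths G w (m + 1) * u ^ (m + 1) / (m + 1)) ∧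
      ∑' p : PrimeIdx G, -Real.log (1 - PrimeIdx.wgt w p * u ^ PrimeIdx.len p)
        = ∑' m : ℕ, Npaths G w (m + 1) * u ^ (m + 1) / (m + 1) := by
  classical
  have hw0 : ∀ e, 0 ≤ w e := fun e => (hw e).le
  set Sr : ℝ := ∑' e, w e with hSrdef
  have hSr0 : 0 ≤ Sr := tsum_nonneg hw0
  have hSp : (0:ℝ) < Sr + 1 := by linarith
  refine ⟨(Sr + 1)⁻¹, by positivity, fun u hu0 hu => ?_⟩
  have h1 : u * (Sr + 1) < 1 := by
    calc u * (Sr + 1) < (Sr + 1)⁻¹ * (Sr + 1) := mul_lt_mul_of_pos_right hu hSp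
      _ = 1 := inv_mul_cancel₀ hSp.ne'
  have hq : Sr * u < 1 := by nlinarith
  have hq0 : 0 ≤ Sr * u := mul_nonneg hSr0 hu0
  set uE : ENNReal := ENNReal.ofReal u with huE
  set SE : ENNReal := ∑' e : G.Dart, ENNReal.ofReal (w e) with hSEdef
  have hSE : SE = ENNReal.ofReal Sr := (ENNReal.ofReal_tsum_of_nonneg hw0 hsum).symm
  have hSEtop : SE ≠ ⊤ := by rw [hSE]; exact ENNReal.ofReal_ne_top
  have hqE : SE * uE < 1 := by
    rw [hSE, huE, ← ENNReal.ofReal_mul hSr0]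
    exact ENNReal.ofReal_lt_one.mpr hq
  -- per-prime-cycle facts
  have hx0 : ∀ p : PrimeIdx G, 0 ≤ PrimeIdx.wgt w p * u ^ PrimeIdx.len p :=
    fun p => mul_nonneg (wgt_nonneg w hw0 p) (pow_nonneg hu0 _)
  have hx1 : ∀ p : PrimeIdx G, PrimeIdx.wgt w p * u ^ PrimeIdx.len p < 1 := by
    intro p
    have hxle : PrimeIdx.wgt w p * u ^ PrimeIdx.len p ≤ (Sr * u) ^ PrimeIdx.len p := by
      rw [mul_pow]
      exact mul_le_mul_of_nonneg_right (wgt_le w hw0 hsum p) (pow_nonneg hu0 _)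
    exact lt_of_le_of_lt hxle (pow_lt_one₀ hq0 hq p.1.2.ne')
  -- the grand chain of equalities in ℝ≥0∞
  have E1 : ∑' p : PrimeIdx G,
      ENNReal.ofReal (-Real.log (1 - PrimeIdx.wgt w p * u ^ PrimeIdx.len p))
      = ∑' p : PrimeIdx G, ∑' k : ℕ,
          (ENNReal.ofReal (PrimeIdx.wgt w p)) ^ (k+1) * uE ^ (PrimeIdx.len p * (k+1))
            / ((k : ENNReal) + 1) := by
    refine tsum_congr fun p => ?_
    rw [ofReal_neg_log_eq _ (hx0 p) (hx1 p)]
    refine tsum_congr fun k => ?_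
    rw [ENNReal.ofReal_mul (wgt_nonneg w hw0 p), ENNReal.ofReal_pow hu0, mul_pow, ← pow_mul]
  have E2 : ∑' p : PrimeIdx G, ∑' k : ℕ,
          (ENNReal.ofReal (PrimeIdx.wgt w p)) ^ (k+1) * uE ^ (PrimeIdx.len p * (k+1))
            / ((k : ENNReal) + 1)
      = ∑' n : {n : ℕ // 0 < n}, ∑' c : PrimeCycles G n.1, ∑' k : ℕ,
          (ENNReal.ofReal (PrimeIdx.wgt w ⟨n, c⟩)) ^ (k+1) * uE ^ (n.1 * (k+1))
            / ((k : ENNReal) + 1) :=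
    ENNReal.tsum_sigma' (β := fun n : {n : ℕ // 0 < n} => PrimeCycles G n.1) _
  have E3 : ∀ n : {n : ℕ // 0 < n},
      ∑' c : PrimeCycles G n.1, ∑' k : ℕ,
          (ENNReal.ofReal (PrimeIdx.wgt w ⟨n, c⟩)) ^ (k+1) * uE ^ (n.1 * (k+1))
            / ((k : ENNReal) + 1)
      = ∑' g : {g : ZMod n.1 → V // PrimeP G n.1 g}, ∑' k : ℕ,
          (@cycE V G w n.1 ⟨n.2.ne'⟩ g.1 (fun i => g.2.1.1 i)) ^ (k+1) * uE ^ (n.1 * (k+1))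
            / ((n.1 : ENNReal) * ((k : ENNReal) + 1)) := by
    rintro ⟨d, hd⟩
    haveI : NeZero d := ⟨hd.ne'⟩
    have hd0E : (d : ENNReal) ≠ 0 := by exact_mod_cast hd.ne'
    have hdtopE : (d : ENNReal) ≠ ⊤ := ENNReal.natCast_ne_top d
    set F : PrimeCycles G d → ENNReal := fun c => ∑' k : ℕ,
        (ENNReal.ofReal (PrimeIdx.wgt w ⟨⟨d, hd⟩, c⟩)) ^ (k+1) * uE ^ (d * (k+1))
          / ((k : ENNReal) + 1) with hF
    have hq1 := tsum_quotient_eq (G := G) (d := d) F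
    have hFg : ∀ g : {g : ZMod d → V // PrimeP G d g},
        F (Quotient.mk (shiftSetoid d (PrimeP G d)) g)
          = ∑' k : ℕ, (@cycE V G w d ⟨hd.ne'⟩ g.1 (fun i => g.2.1.1 i)) ^ (k+1)
              * uE ^ (d * (k+1)) / ((k : ENNReal) + 1) := by
      intro g
      rw [hF]
      dsimp only
      refine tsum_congr fun k => ?_
      rw [wgt_mk w d hd g, ← cycE_eq_ofReal w hw0]
    calc ∑' c : PrimeCycles G d, F c
        = (d : ENNReal)⁻¹ * ((d : ENNReal) * ∑' c : PrimeCycles G d, F c) := by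
          rw [← mul_assoc, ENNReal.inv_mul_cancel hd0E hdtopE, one_mul]
      _ = (d : ENNReal)⁻¹ * ∑' g : {g : ZMod d → V // PrimeP G d g},
            F (Quotient.mk (shiftSetoid d (PrimeP G d)) g) := by rw [hq1]
      _ = ∑' g : {g : ZMod d → V // PrimeP G d g}, (d : ENNReal)⁻¹ *
            F (Quotient.mk (shiftSetoid d (PrimeP G d)) g) := ENNReal.tsum_mul_left.symm
      _ = _ := by
          refine tsum_congr fun g => ?_
          rw [hFg g, ← ENNReal.tsum_mul_left]
          refine tsum_congr fun k => ?_
          rw [ennreal_div_mul_div _ _ _ hd0E hdtopE]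
  have E4 : ∀ n : {n : ℕ // 0 < n},
      ∑' g : {g : ZMod n.1 → V // PrimeP G n.1 g}, ∑' k : ℕ,
          (@cycE V G w n.1 ⟨n.2.ne'⟩ g.1 (fun i => g.2.1.1 i)) ^ (k+1) * uE ^ (n.1 * (k+1))
            / ((n.1 : ENNReal) * ((k : ENNReal) + 1))
      = ∑' z : {g : ZMod n.1 → V // PrimeP G n.1 g} × {k : ℕ // 0 < k},
          pterm G w uE ⟨n, z⟩ := by
    intro n
    rw [ENNReal.tsum_prod']
    refine tsum_congr fun g => ?_
    rw [← (succEquiv).tsum_eq (fun z => pterm G w uE ⟨n, (g, z)⟩)]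
    refine tsum_congr fun k => ?_
    show _ = pterm G w uE ⟨n, (g, succEquiv k)⟩
    unfold pterm
    dsimp only
    have hk1 : ((succEquiv k : {k : ℕ // 0 < k}) : ℕ) = k + 1 := rfl
    rw [hk1]
    push_cast
    ring_nf
  have E5 : ∑' n : {n : ℕ // 0 < n}, ∑' z : {g : ZMod n.1 → V // PrimeP G n.1 g} × {k : ℕ // 0 < k},
        pterm G w uE ⟨n, z⟩
      = ∑' y : PIdx2 G, pterm G w uE y :=
    (ENNReal.tsum_sigma' (β := fun n : {n : ℕ // 0 < n} =>
      {g : ZMod n.1 → V // PrimeP G n.1 g} × {k : ℕ // 0 < k}) (pterm G w uE)).symm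
  have E6 : ∑' y : PIdx2 G, pterm G w uE y = ∑' x : CIdx G, cterm G w uE x := by
    rw [← (decompEquiv G).tsum_eq (pterm G w uE)]
    exact tsum_congr fun x => (cterm_eq_pterm_fwd w uE x).symm
  have E7 : ∑' x : CIdx G, cterm G w uE x
      = ∑' m : {n : ℕ // 0 < n}, NEfun G w m * uE ^ m.1 / (m.1 : ENNReal) := by
    refine (ENNReal.tsum_sigma' (β := fun m : {n : ℕ // 0 < n} =>
      {f : ZMod m.1 → V // ClosedRedP G m.1 f}) (cterm G w uE)).trans ?_
    refine tsum_congr fun m => ?_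
    haveI : NeZero m.1 := ⟨m.2.ne'⟩
    calc ∑' f : {f : ZMod m.1 → V // ClosedRedP G m.1 f}, cterm G w uE ⟨m, f⟩
        = ∑' f : {f : ZMod m.1 → V // ClosedRedP G m.1 f},
            (@cycE V G w m.1 ⟨m.2.ne'⟩ f.1 (fun i => f.2.1 i)) * (uE ^ m.1 / (m.1 : ENNReal)) := by
          refine tsum_congr fun f => ?_
          unfold cterm
          rw [mul_div_assoc]
      _ = NEfun G w m * (uE ^ m.1 / (m.1 : ENNReal)) := ENNReal.tsum_mul_right
      _ = _ := by rw [mul_div_assoc]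
  have E8 : ∑' m : {n : ℕ // 0 < n}, NEfun G w m * uE ^ m.1 / (m.1 : ENNReal)
      = ∑' m : ℕ, NEfun G w (succEquiv m) * uE ^ (m + 1) / ((m : ENNReal) + 1) := by
    rw [← (succEquiv).tsum_eq (fun m : {n : ℕ // 0 < n} => NEfun G w m * uE ^ m.1 / (m.1 : ENNReal))]
    refine tsum_congr fun m => ?_
    show NEfun G w (succEquiv m) * uE ^ (succEquiv m).1 / (((succEquiv m).1 : ℕ) : ENNReal) = _
    have h1 : (succEquiv m).1 = m + 1 := rfl
    rw [h1]
    push_cast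
    ring_nf
  have key : ∑' p : PrimeIdx G,
      ENNReal.ofReal (-Real.log (1 - PrimeIdx.wgt w p * u ^ PrimeIdx.len p))
      = ∑' m : ℕ, NEfun G w (succEquiv m) * uE ^ (m + 1) / ((m : ENNReal) + 1) := by
    rw [E1, E2]
    rw [tsum_congr E3, tsum_congr E4, E5, E6, E7, E8]
  -- finiteness
  have hNEle : ∀ m : {n : ℕ // 0 < n}, NEfun G w m ≤ SE ^ m.1 := by
    intro m
    haveI : NeZero m.1 := ⟨m.2.ne'⟩
    exact tsum_cycE_le w m.1
  have hfin : (∑' m : ℕ, NEfun G w (succEquiv m) * uE ^ (m + 1) / ((m : ENNReal) + 1)) ≠ ⊤ := by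
    have hterm : ∀ m : ℕ, NEfun G w (succEquiv m) * uE ^ (m + 1) / ((m : ENNReal) + 1)
        ≤ (SE * uE) ^ m := by
      intro m
      have h2 : NEfun G w (succEquiv m) * uE ^ (m + 1) / ((m : ENNReal) + 1)
          ≤ NEfun G w (succEquiv m) * uE ^ (m + 1) := by
        rw [div_eq_mul_inv]
        calc NEfun G w (succEquiv m) * uE ^ (m + 1) * ((m : ENNReal) + 1)⁻¹
            ≤ NEfun G w (succEquiv m) * uE ^ (m + 1) * 1 := by
              refine mul_le_mul_right ?_ _
              refine ENNReal.inv_le_one.mpr ?_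
              exact le_add_self
          _ = _ := mul_one _
      refine h2.trans ?_
      have h3 : NEfun G w (succEquiv m) * uE ^ (m + 1) ≤ SE ^ (m + 1) * uE ^ (m + 1) :=
        mul_le_mul_left (hNEle (succEquiv m)) _
      refine h3.trans ?_
      rw [← mul_pow]
      exact pow_le_pow_right_of_le_one' hqE.le (Nat.le_succ m)
    refine ne_top_of_le_ne_top ?_ (Summable.tsum_le_tsum hterm ENNReal.summable ENNReal.summable)
    rw [ENNReal.tsum_geometric]
    refine ENNReal.inv_ne_top.mpr ?_
    intro h0
    exact absurd (tsub_eq_zero_iff_le.mp h0) (not_le.mpr hqE)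
  have hLfin : (∑' p : PrimeIdx G,
      ENNReal.ofReal (-Real.log (1 - PrimeIdx.wgt w p * u ^ PrimeIdx.len p))) ≠ ⊤ := by
    rw [key]; exact hfin
  -- nonnegativity of the log terms
  have hlog0 : ∀ p : PrimeIdx G, 0 ≤ -Real.log (1 - PrimeIdx.wgt w p * u ^ PrimeIdx.len p) := by
    intro p
    rw [neg_nonneg]
    refine Real.log_nonpos (by linarith [hx1 p]) (by linarith [hx0 p])
  -- first summability
  have hsum1 : Summable (fun p : PrimeIdx G =>
      -Real.log (1 - PrimeIdx.wgt w p * u ^ PrimeIdx.len p)) := by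
    have h := ENNReal.summable_toReal hLfin
    refine (summable_congr fun p => ?_).mp h
    rw [ENNReal.toReal_ofReal (hlog0 p)]
  -- Npaths in terms of NEfun
  have hNp : ∀ m : ℕ, Npaths G w (m + 1) = (NEfun G w (succEquiv m)).toReal := by
    intro m
    haveI : NeZero ((succEquiv m : {k : ℕ // 0 < k}) : ℕ) := ⟨Nat.succ_ne_zero m⟩
    have h1 : Npaths G w (m + 1)
        = ∑' p : {f : ZMod (m+1) → V // ClosedRedP G (m+1) f}, cycW G w (m+1) p.1 p.2.1 := by
      unfold Npaths
      rw [dif_neg (Nat.succ_ne_zero m)]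
    rw [h1]
    unfold NEfun
    rw [ENNReal.tsum_toReal_eq (fun p => by
      rw [cycE_eq_ofReal w hw0]; exact ENNReal.ofReal_ne_top)]
    refine tsum_congr fun p => ?_
    rw [cycE_eq_ofReal w hw0, ENNReal.toReal_ofReal (cycW_nonneg w hw0 _ _)]
    rfl
  have hNE0 : ∀ m : ℕ, NEfun G w (succEquiv m) ≠ ⊤ := by
    intro m
    refine ne_top_of_le_ne_top ?_ (hNEle (succEquiv m))
    exact ENNReal.pow_ne_top hSEtop
  have huEtop : uE ≠ ⊤ := ENNReal.ofReal_ne_top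
  have htermtop : ∀ m : ℕ,
      NEfun G w (succEquiv m) * uE ^ (m + 1) / ((m : ENNReal) + 1) ≠ ⊤ := by
    intro m
    refine (ENNReal.div_lt_top ?_ ?_).ne
    · exact ENNReal.mul_ne_top (hNE0 m) (ENNReal.pow_ne_top huEtop)
    · exact (lt_of_lt_of_le zero_lt_one le_add_self).ne'
  have htermval : ∀ m : ℕ,
      (NEfun G w (succEquiv m) * uE ^ (m + 1) / ((m : ENNReal) + 1)).toReal
        = Npaths G w (m + 1) * u ^ (m + 1) / (m + 1) := by
    intro m
    rw [ENNReal.toReal_div, ENNReal.toReal_mul, ENNReal.toReal_pow, hNp m]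
    rw [show uE.toReal = u from by rw [huE, ENNReal.toReal_ofReal hu0]]
    rw [show ((m : ENNReal) + 1).toReal = (m : ℝ) + 1 from by
      rw [show ((m : ENNReal) + 1) = ((m + 1 : ℕ) : ENNReal) from by push_cast; ring,
        ENNReal.toReal_natCast]
      push_cast; ring]
  -- second summability
  have hsum2 : Summable (fun m : ℕ => Npaths G w (m + 1) * u ^ (m + 1) / (m + 1)) := by
    have h := ENNReal.summable_toReal hfin
    refine (summable_congr fun m => ?_).mp h
    rw [htermval m]
  refine ⟨hsum1, hsum2, ?_⟩
  -- final equality via toReal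
  have hL : ∑' p : PrimeIdx G, -Real.log (1 - PrimeIdx.wgt w p * u ^ PrimeIdx.len p)
      = (∑' p : PrimeIdx G,
          ENNReal.ofReal (-Real.log (1 - PrimeIdx.wgt w p * u ^ PrimeIdx.len p))).toReal := by
    rw [ENNReal.tsum_toReal_eq (fun p => ENNReal.ofReal_ne_top)]
    refine tsum_congr fun p => ?_
    rw [ENNReal.toReal_ofReal (hlog0 p)]
  have hR : ∑' m : ℕ, Npaths G w (m + 1) * u ^ (m + 1) / (m + 1)
      = (∑' m : ℕ, NEfun G w (succEquiv m) * uE ^ (m + 1) / ((m : ENNReal) + 1)).toReal := by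
    rw [ENNReal.tsum_toReal_eq htermtop]
    exact (tsum_congr fun m => (htermval m).symm)
  rw [hL, hR, key]
end
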